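/- arXiv:1906.06057 — 3 statements merged into one kernel-verified Lean document; each statement's English description precedes it below -/
import Mathlib

section
/- Define X_e = (p_e + q_e)/2 for e ∈ {ua, ub, bc}, Y_uaub = (p_ua*p_ub + q_ua*q_ub)/2, Y_ubbc = (p_ub*p_bc + q_ub*q_bc)/2, and Z = (p_ua*p_ub*p_bc + q_ua*q_ub*q_bc)/2. If p_ub + q_ub ≠ 0, then X_ua*X_bc + (Z - X_ua*Y_ubbc - X_bc*Y_uaub)/X_ub = (p_ua - q_ua)*(p_bc - q_bc)/4. -/
theorem stmt_2 (p_ua q_ua p_ub q_ub p_bc q_bc : ℝ)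
    (hub : p_ub + q_ub ≠ 0) :
    let X_ua := (p_ua + q_ua) / 2
    let X_ub := (p_ub + q_ub) / 2
    let X_bc := (p_bc + q_bc) / 2
    let Y_uaub := (p_ua * p_ub + q_ua * q_ub) / 2
    let Y_ubbc := (p_ub * p_bc + q_ub * q_bc) / 2
    let Z := (p_ua * p_ub * p_bc + q_ua * q_ub * q_bc) / 2
    X_ua * X_bc + (Z - X_ua * Y_ubbc - X_bc * Y_uaub) / X_ub =
      (p_ua - q_ua) * (p_bc - q_bc) / 4 := by
  intro X_ua X_ub X_bc Y_uaub Y_ubbc Z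
  have h2 : X_ub ≠ 0 := by
    simp only [X_ub]
    intro h
    apply hub
    linarith [h]
  field_simp [X_ua, X_ub, X_bc, Y_uaub, Y_ubbc, Z]
  ring
end

section
/- Let p_ua, q_ua, p_ub, q_ub, p_uc, q_uc be reals with (p_ua-q_ua)*(p_ub-q_ub) ≠ 0, (p_ua-q_ua)*(p_uc-q_uc) ≠ 0, and (p_ub-q_ub)*(p_uc-q_uc) > 0. With X_ui = (p_ui+q_ui)/2 and Y_uiuj = (p_ui*p_uj + q_ui*q_uj)/2, we have |p_ua - q_ua|/2 = sqrt( ((Y_uaub - X_ua*X_ub)*(Y_uauc - X_ua*X_uc)) / (Y_ubuc - X_ub*X_uc) ). -/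
/-!
In a balanced mixture of two graphs each covariance factors:
`Y_ij - X_i X_j = ((p_i - q_i) / 2) * ((p_j - q_j) / 2)`. Hence the ratio of covariances
`Cov(a, b) Cov(a, c) / Cov(b, c)` is `((p_a - q_a) / 2) ^ 2`.
-/

theorem balancedMixture_cov_eq (p q p' q' : ℝ) :
    (p * p' + q * q') / 2 - (p + q) / 2 * ((p' + q') / 2) = (p - q) / 2 * ((p' - q') / 2) := by
  ring

theorem Real.sqrt_mul_mul_div_mul_eq_abs (x y z : ℝ) (hyz : y * z ≠ 0) :
    √(x * y * (x * z) / (y * z)) = |x| := by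
  rw [show x * y * (x * z) / (y * z) = x ^ 2 by
    rw [mul_mul_mul_comm, ← sq, mul_div_assoc, div_self hyz, mul_one], Real.sqrt_sq_eq_abs]

theorem stmt_3_general (p_ua q_ua p_ub q_ub p_uc q_uc : ℝ)
    (hbc : (p_ub - q_ub) * (p_uc - q_uc) > 0) :
    let X_ua := (p_ua + q_ua) / 2
    let X_ub := (p_ub + q_ub) / 2
    let X_uc := (p_uc + q_uc) / 2
    let Y_uaub := (p_ua * p_ub + q_ua * q_ub) / 2
    let Y_uauc := (p_ua * p_uc + q_ua * q_uc) / 2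
    let Y_ubuc := (p_ub * p_uc + q_ub * q_uc) / 2
    |p_ua - q_ua| / 2 =
      Real.sqrt (((Y_uaub - X_ua * X_ub) * (Y_uauc - X_ua * X_uc)) /
        (Y_ubuc - X_ub * X_uc)) := by
  simp only [balancedMixture_cov_eq]
  have hcov_bc : (p_ub - q_ub) / 2 * ((p_uc - q_uc) / 2) ≠ 0 := by
    rw [div_mul_div_comm]
    exact div_ne_zero hbc.ne' (by norm_num)
  rw [Real.sqrt_mul_mul_div_mul_eq_abs _ _ _ hcov_bc, abs_div, abs_two]

theorem stmt_3 (p_ua q_ua p_ub q_ub p_uc q_uc : ℝ)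
    (hab : (p_ua - q_ua) * (p_ub - q_ub) ≠ 0)
    (hac : (p_ua - q_ua) * (p_uc - q_uc) ≠ 0)
    (hbc : (p_ub - q_ub) * (p_uc - q_uc) > 0) :
    let X_ua := (p_ua + q_ua) / 2
    let X_ub := (p_ub + q_ub) / 2
    let X_uc := (p_uc + q_uc) / 2
    let Y_uaub := (p_ua * p_ub + q_ua * q_ub) / 2
    let Y_uauc := (p_ua * p_uc + q_ua * q_uc) / 2
    let Y_ubuc := (p_ub * p_uc + q_ub * q_uc) / 2
    |p_ua - q_ua| / 2 =
      Real.sqrt (((Y_uaub - X_ua * X_ub) * (Y_uauc - X_ua * X_uc)) /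
        (Y_ubuc - X_ub * X_uc)) :=
  stmt_3_general p_ua q_ua p_ub q_ub p_uc q_uc hbc
end

section
/- If p_ua, q_ua, p_ub, q_ub, p_uc, q_uc are reals satisfying the star-vertex moment equations X_ui = (p_ui+q_ui)/2, Y_uiuj = (p_ui p_uj + q_ui q_uj)/2, and s_ua := sign(p_ua - q_ua), with all differences p_ui - q_ui nonzero and (p_ub-q_ub)(p_uc-q_uc) > 0, then p_ua = X_ua + s_ua*sqrt(((Y_uaub - X_ua X_ub)(Y_uauc - X_ua X_uc))/(Y_ubuc - X_ub X_uc)) and q_ua = X_ua - s_ua*sqrt(((Y_uaub - X_ua X_ub)(Y_uauc - X_ua X_uc))/(Y_ubuc - X_ub X_uc)). -/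
theorem stmt_5 (p_ua q_ua p_ub q_ub p_uc q_uc : ℝ)
    (ha : p_ua - q_ua ≠ 0) (hb : p_ub - q_ub ≠ 0) (hc : p_uc - q_uc ≠ 0)
    (hbc : (p_ub - q_ub) * (p_uc - q_uc) > 0) :
    let X_ua := (p_ua + q_ua) / 2
    let X_ub := (p_ub + q_ub) / 2
    let X_uc := (p_uc + q_uc) / 2
    let Y_uaub := (p_ua * p_ub + q_ua * q_ub) / 2
    let Y_uauc := (p_ua * p_uc + q_ua * q_uc) / 2
    let Y_ubuc := (p_ub * p_uc + q_ub * q_uc) / 2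
    let s_ua := Real.sign (p_ua - q_ua)
    p_ua = X_ua + s_ua * Real.sqrt (((Y_uaub - X_ua * X_ub) * (Y_uauc - X_ua * X_uc)) /
        (Y_ubuc - X_ub * X_uc)) ∧
    q_ua = X_ua - s_ua * Real.sqrt (((Y_uaub - X_ua * X_ub) * (Y_uauc - X_ua * X_uc)) /
        (Y_ubuc - X_ub * X_uc)) := by
  intro X_ua X_ub X_uc Y_uaub Y_uauc Y_ubuc s_ua
  have hbc' : (p_ub - q_ub) * (p_uc - q_uc) ≠ 0 := ne_of_gt hbc
  have harg : ((Y_uaub - X_ua * X_ub) * (Y_uauc - X_ua * X_uc)) / (Y_ubuc - X_ub * X_uc)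
      = ((p_ua - q_ua) / 2) ^ 2 := by
    have e1 : Y_uaub - X_ua * X_ub = (p_ua - q_ua) * (p_ub - q_ub) / 4 := by
      simp only [Y_uaub, X_ua, X_ub]; ring
    have e2 : Y_uauc - X_ua * X_uc = (p_ua - q_ua) * (p_uc - q_uc) / 4 := by
      simp only [Y_uauc, X_ua, X_uc]; ring
    have e3 : Y_ubuc - X_ub * X_uc = (p_ub - q_ub) * (p_uc - q_uc) / 4 := by
      simp only [Y_ubuc, X_ub, X_uc]; ring
    rw [e1, e2, e3]
    field_simp
    ring
  have hsqrt : Real.sqrt (((Y_uaub - X_ua * X_ub) * (Y_uauc - X_ua * X_uc)) /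
      (Y_ubuc - X_ub * X_uc)) = |(p_ua - q_ua) / 2| := by
    rw [harg, Real.sqrt_sq_eq_abs]
  have hsign : s_ua * |(p_ua - q_ua) / 2| = (p_ua - q_ua) / 2 := by
    simp only [s_ua]
    rcases ha.lt_or_gt with h | h
    · rw [Real.sign_of_neg h, abs_of_nonpos (by linarith)]; ring
    · rw [Real.sign_of_pos h, abs_of_nonneg (by linarith)]; ring
  rw [hsqrt, hsign]
  constructor <;> simp only [X_ua] <;> ring
end
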